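/- arXiv:math/0606095 — 3 statements merged into one kernel-verified Lean document; each statement's English description precedes it below -/
import Mathlib

section
/- Let (V,g,J) be a Hermitian vector space and let λ^pV ⊗₁ λ^qV be the space of tensors Q: λ^pV → λ^qV satisfying [(𝕁Q)(X₁,…,X_p)](Y₁,…,Y_q) = -[𝕁(Q(X₁,…,X_p))](Y₁,…,Y_q), where 𝕁 acts on λ^rV as r^{-1}𝒥. Then the image of the total antisymmetrisation map a restricted to λ^pV ⊗₁ λ^qV is contained in λ^{p,q}V. -/
noncomputable section
open scoped BigOperators RealInnerProductSpace

variable {V : Type*} [NormedAddCommGroup V] [InnerProductSpace ℝ V]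

/-- Derivation extension 𝒥 of `J` acting on `p`-multilinear functions:
`(𝒥α)(v₁,…,v_p) = Σ_k α(v₁,…,Jv_k,…,v_p)`. -/
def calJ (J : V →ₗ[ℝ] V) {p : ℕ} {W : Type*} [AddCommGroup W] [Module ℝ W]
    (α : (Fin p → V) → W) : (Fin p → V) → W :=
  fun v => ∑ k, α (Function.update v k (J (v k)))

/-- The total antisymmetrisation `a(Q)` of a tensor `Q : λ^pV → λ^qV`,
as a `(p+q)`-multilinear function. -/
def totalAlt (p q : ℕ) (Q : (Fin p → V) → AlternatingMap ℝ V ℝ (Fin q)) :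
    (Fin (p + q) → V) → ℝ :=
  fun v => ∑ σ : Equiv.Perm (Fin (p + q)),
    ((Equiv.Perm.sign σ : ℤ) : ℝ) *
      Q (fun i => v (σ (Fin.castAdd q i))) (fun j => v (σ (Fin.natAdd p j)))

section Conditions

variable (J : V →ₗ[ℝ] V)

/-- `Q` has arguments of type `λ^p`:  `𝒥²` applied in the arguments is `-p²`. -/
def ArgTypeP (p q : ℕ) (Q : AlternatingMap ℝ V (AlternatingMap ℝ V ℝ (Fin q)) (Fin p)) : Prop :=
  calJ J (calJ J ⇑Q) = (-((p : ℝ)) ^ 2) • ⇑Q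

/-- `Q` has values in `λ^qV`:  each value is in the `-q²`-eigenspace of `𝒥²`. -/
def ValTypeP (p q : ℕ) (Q : AlternatingMap ℝ V (AlternatingMap ℝ V ℝ (Fin q)) (Fin p)) : Prop :=
  ∀ v : Fin p → V, calJ J (calJ J ⇑(Q v)) = (-((q : ℝ)) ^ 2) • ⇑(Q v)

/-- `Q ∈ λ^pV ⊗₁ λ^qV`:  `𝕁` applied in the arguments equals minus `𝕁` applied to the
values, where `𝕁` acts on `λ^rV` as `r⁻¹𝒥`.  (Cleared of denominators.) -/
def AntiCommJ (p q : ℕ) (Q : AlternatingMap ℝ V (AlternatingMap ℝ V ℝ (Fin q)) (Fin p)) : Prop :=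
  ∀ v : Fin p → V, (q : ℝ) • ⇑(calJ J (⇑Q) v) = (-(p : ℝ)) • calJ J ⇑(Q v)

/-- `Q ∈ λ^pV ⊗₂ λ^qV`:  `Q` commutes with `𝕁`. -/
def CommJ (p q : ℕ) (Q : AlternatingMap ℝ V (AlternatingMap ℝ V ℝ (Fin q)) (Fin p)) : Prop :=
  ∀ v : Fin p → V, (q : ℝ) • ⇑(calJ J (⇑Q) v) = ((p : ℝ)) • calJ J ⇑(Q v)

end Conditions

/-!
On a function `f` of two groups of arguments, let `A` be `𝒥` acting on the first `p` slots and
`B` be `𝒥` acting on the last `q` slots. These commute, and since `𝒥` is a derivation,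
`𝒥 (a f) = a ((A + B) f)` for the total antisymmetrisation `a`. For `f = Q` the hypotheses say
`A² Q = -p² Q`, `B² Q = -q² Q` and `q A Q = -p B Q`, so `q (A B Q) = B (q A Q) = -p B² Q = p q² Q`,
i.e. `A B Q = p q Q` (if `q = 0` there are no slots for `B`, so `B Q = 0`). Hence
`(A + B)² Q = (-p² + 2pq - q²) Q = -(p - q)² Q`, and applying `a` gives the claim.
-/

section CalJ

variable (J : V →ₗ[ℝ] V) {p : ℕ} {W : Type*} [AddCommGroup W] [Module ℝ W]

def calJₗ : ((Fin p → V) → W) →ₗ[ℝ] ((Fin p → V) → W) where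
  toFun := calJ J
  map_add' α β := by
    funext v
    exact Finset.sum_add_distrib
  map_smul' c α := by
    funext v
    simp only [calJ, Pi.smul_apply, Finset.smul_sum, RingHom.id_apply]

@[simp]
theorem calJₗ_apply (α : (Fin p → V) → W) : calJₗ J α = calJ J α := rfl

theorem calJ_fin_zero (α : (Fin 0 → V) → W) : calJ J α = 0 := by
  funext v
  simp [calJ]

theorem calJ_coe_alternatingMap {M N ι : Type*} [AddCommGroup M] [Module ℝ M] [AddCommGroup N]
    [Module ℝ N] (R : (Fin p → V) → AlternatingMap ℝ M N ι) :
    calJ J (fun u => ⇑(R u)) = fun u => ⇑(calJ J R u) := by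
  funext u
  exact (map_sum (⟨⟨DFunLike.coe, rfl⟩, fun _ _ => rfl⟩ : AlternatingMap ℝ M N ι →+ _) _ _).symm

theorem commute_calJₗ_compLeft {q : ℕ} :
    Commute (calJₗ J : Module.End ℝ ((Fin p → V) → (Fin q → V) → W))
      ((calJₗ J).compLeft (Fin p → V)) := by
  ext f u w
  simp only [Module.End.mul_apply, LinearMap.compLeft_apply, Function.comp_apply, calJₗ_apply,
    calJ, Finset.sum_apply]
  exact Finset.sum_comm

end CalJ

theorem Fin.castAdd_ne_natAdd {m n : ℕ} (i : Fin m) (j : Fin n) :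
    Fin.castAdd n i ≠ Fin.natAdd m j := by
  simp only [ne_eq, Fin.ext_iff, Fin.val_castAdd, Fin.val_natAdd]
  omega

def totalAltFun {E : Type*} (p q : ℕ) (f : (Fin p → E) → (Fin q → E) → ℝ) :
    (Fin (p + q) → E) → ℝ :=
  fun v => ∑ σ : Equiv.Perm (Fin (p + q)),
    ((Equiv.Perm.sign σ : ℤ) : ℝ) * f (v ∘ σ ∘ Fin.castAdd q) (v ∘ σ ∘ Fin.natAdd p)

theorem totalAltFun_smul {E : Type*} (p q : ℕ) (c : ℝ) (f : (Fin p → E) → (Fin q → E) → ℝ) :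
    totalAltFun p q (c • f) = c • totalAltFun p q f := by
  funext v
  simp only [totalAltFun, Pi.smul_apply, smul_eq_mul, Finset.mul_sum]
  exact Finset.sum_congr rfl fun σ _ => mul_left_comm ..

theorem calJ_totalAltFun (J : V →ₗ[ℝ] V) (p q : ℕ) (f : (Fin p → V) → (Fin q → V) → ℝ) :
    calJ J (totalAltFun p q f) = totalAltFun p q (calJ J f + fun u => calJ J (f u)) := by
  funext v
  simp only [calJ, totalAltFun]
  rw [Finset.sum_comm]
  refine Finset.sum_congr rfl fun σ _ => ?_
  have hl (i : Fin p) (x : V) := Function.update_comp_eq_of_injective v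
    (σ.injective.comp (Fin.castAdd_injective p q)) i x
  have hr (j : Fin q) (x : V) := Function.update_comp_eq_of_injective v
    (σ.injective.comp (Fin.natAdd_injective q p)) j x
  have hlr (i : Fin p) (x : V) : Function.update v (σ (Fin.castAdd q i)) x ∘ σ ∘ Fin.natAdd p =
      v ∘ σ ∘ Fin.natAdd p :=
    Function.update_comp_eq_of_notMem_range v x fun ⟨j, hj⟩ =>
      Fin.castAdd_ne_natAdd i j (σ.injective hj).symm
  have hrl (j : Fin q) (x : V) : Function.update v (σ (Fin.natAdd p j)) x ∘ σ ∘ Fin.castAdd q =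
      v ∘ σ ∘ Fin.castAdd q :=
    Function.update_comp_eq_of_notMem_range v x fun ⟨i, hi⟩ =>
      Fin.castAdd_ne_natAdd i j (σ.injective hi)
  rw [← Finset.mul_sum, ← Equiv.sum_comp σ, Fin.sum_univ_add]
  simp only [Pi.add_apply, calJ, Finset.sum_apply]
  congr 2 <;> refine Finset.sum_congr rfl fun k _ => ?_
  · rw [hlr]; exact congrArg (f · _) (hl k _)
  · rw [hrl]; exact congrArg (f (v ∘ σ ∘ Fin.castAdd q)) (hr k _)

theorem Module.End.add_sq_apply_of_smul_eq_neg_smul {M : Type*} [AddCommGroup M] [Module ℝ M]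
    {A B : Module.End ℝ M} (hAB : Commute A B) {p q : ℝ} {f : M}
    (hA : (A ^ 2) f = -p ^ 2 • f) (hB : (B ^ 2) f = -q ^ 2 • f)
    (hanti : q • A f = -p • B f) (hq : q = 0 → B f = 0) :
    ((A + B) ^ 2) f = -(p - q) ^ 2 • f := by
  have hAB_f : (A * B) f = (p * q) • f := by
    rcases eq_or_ne q 0 with rfl | hq0
    · simp [hq rfl]
    · refine smul_right_injective M hq0 ?_
      calc q • (A * B) f = B (q • A f) := by rw [hAB.eq, Module.End.mul_apply, map_smul]
        _ = -p • (B ^ 2) f := by rw [hanti, map_smul, sq, Module.End.mul_apply]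
        _ = q • (p * q) • f := by rw [hB, smul_smul, smul_smul]; congr 1; ring
  rw [sq, add_mul, mul_add, mul_add, ← hAB.eq, ← sq, ← sq]
  simp only [LinearMap.add_apply]
  rw [hA, hB, hAB_f]
  module

theorem totalAlt_mem_lambdaPQ_of_antiCommJ_general
    (J : V →ₗ[ℝ] V)
    (p q : ℕ) (Q : AlternatingMap ℝ V (AlternatingMap ℝ V ℝ (Fin q)) (Fin p))
    (harg : ArgTypeP J p q Q) (hval : ValTypeP J p q Q) (hanti : AntiCommJ J p q Q) :
    calJ J (calJ J (totalAlt p q ⇑Q)) = (-(((p : ℝ) - q) ^ 2)) • totalAlt p q ⇑Q := by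
  let f : (Fin p → V) → (Fin q → V) → ℝ := fun u => ⇑(Q u)
  let A : Module.End ℝ ((Fin p → V) → (Fin q → V) → ℝ) := calJₗ J
  let B : Module.End ℝ ((Fin p → V) → (Fin q → V) → ℝ) := (calJₗ J).compLeft (Fin p → V)
  have hA : (A ^ 2) f = -(p : ℝ) ^ 2 • f := by
    rw [sq, Module.End.mul_apply]
    simp only [A, calJₗ_apply, f, calJ_coe_alternatingMap]
    rw [show calJ J (calJ J ⇑Q) = _ from harg]
    rfl
  have hB : (B ^ 2) f = -(q : ℝ) ^ 2 • f := funext hval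
  have hAB : (q : ℝ) • A f = -(p : ℝ) • B f := by
    simp only [A, calJₗ_apply, f, calJ_coe_alternatingMap]
    exact funext hanti
  have hq : (q : ℝ) = 0 → B f = 0 := by
    intro hq
    obtain rfl : q = 0 := Nat.cast_eq_zero.mp hq
    exact funext fun u => calJ_fin_zero J (f u)
  have hD := Module.End.add_sq_apply_of_smul_eq_neg_smul (commute_calJₗ_compLeft J) hA hB hAB hq
  change calJ J (calJ J (totalAltFun p q f)) = _ • totalAltFun p q f
  rw [calJ_totalAltFun, calJ_totalAltFun, ← totalAltFun_smul, ← hD]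
  rfl

theorem totalAlt_mem_lambdaPQ_of_antiCommJ
    {n : ℕ} (hdim : Module.finrank ℝ V = 2 * n)
    (J : V →ₗ[ℝ] V) (hJ2 : ∀ v, J (J v) = -v)
    (hJg : ∀ u v : V, ⟪J u, J v⟫ = ⟪u, v⟫)
    (p q : ℕ) (Q : AlternatingMap ℝ V (AlternatingMap ℝ V ℝ (Fin q)) (Fin p))
    (harg : ArgTypeP J p q Q) (hval : ValTypeP J p q Q) (hanti : AntiCommJ J p q Q) :
    calJ J (calJ J (totalAlt p q ⇑Q)) = (-(((p : ℝ) - q) ^ 2)) • totalAlt p q ⇑Q :=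
  totalAlt_mem_lambdaPQ_of_antiCommJ_general J p q Q harg hval hanti
end
end

section
/- Let (V,g,J) be a Hermitian vector space and p ≠ q. Then the total antisymmetrisation map a: λ^pV ⊗₁ λ^qV → Λ^{p+q}V is injective. -/
noncomputable section
open scoped BigOperators RealInnerProductSpace

variable {V : Type*} [NormedAddCommGroup V] [InnerProductSpace ℝ V]

open Function Finset Complex

/-!
Complexify: `typeComponent J τ z f` is the complex-multilinear extension of `f` evaluated at
`J`-eigenvectors, one per slot, of eigenvalue `i` where `τ` is true and `-i` where it is false.
For `B = blockForm Q` the three type conditions on `Q` become, on every nonzero component, the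
equations `(∑ args)² = -p²`, `(∑ vals)² = -q²`, `q ∑ args + p ∑ vals = 0` between sums of these
eigenvalues, which leave only `τ = Sum.isLeft` and its conjugate `τ = Sum.isRight`.
Now take the `Sum.isLeft`-component of `∑ σ, sign σ • B ∘ σ = 0`. The permutation `σ` contributes
a component of type `Sum.isLeft ∘ σ`, which vanishes unless `σ` preserves the blocks (exchanging
them would need `p = q`), and then it contributes the `Sum.isLeft`-component itself. Hence that
component vanishes, so does its conjugate, and `B` is the sum of all its components.
-/

instance {R M N ι : Type*} [Semiring R] [AddCommMonoid M] [Module R M] [AddCommMonoid N]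
    [Module R N] : IsZeroApply (AlternatingMap R M N ι) (ι → M) N :=
  ⟨fun _ => rfl⟩

instance {R M N ι : Type*} [Semiring R] [AddCommMonoid M] [Module R M] [AddCommMonoid N]
    [Module R N] : IsAddApply (AlternatingMap R M N ι) (ι → M) N :=
  ⟨fun _ _ _ => rfl⟩

theorem Equiv.Perm.card_eq_of_isLeft_comp_eq_isRight {α β : Type*} [Fintype α] [Fintype β]
    {σ : Equiv.Perm (α ⊕ β)} (hσ : Sum.isLeft ∘ σ = Sum.isRight) :
    Fintype.card α = Fintype.card β := by
  have h := Equiv.sum_comp σ fun i => if i.isLeft then 1 else 0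
  have hσ' (i : α ⊕ β) : (σ i).isLeft = i.isRight := congrFun hσ i
  simp only [hσ', Fintype.sum_sum_type] at h
  simpa using h.symm

theorem eq_isLeft_or_isRight_of_card_filter {α β : Type*} [Fintype α] [Fintype β]
    {τ : α ⊕ β → Bool}
    (h : (#{a | τ (Sum.inl a)} = Fintype.card α ∧ #{b | τ (Sum.inr b)} = 0) ∨
      (#{a | τ (Sum.inl a)} = 0 ∧ #{b | τ (Sum.inr b)} = Fintype.card β)) :
    τ = Sum.isLeft ∨ τ = Sum.isRight := by
  simp only [← card_univ, card_filter_eq_iff, card_filter_eq_zero_iff, mem_univ,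
    forall_const] at h
  rcases h with ⟨hl, hr⟩ | ⟨hl, hr⟩
  · left
    funext i
    cases i <;> simp_all
  · right
    funext i
    cases i <;> simp_all

theorem eq_and_eq_zero_or_eq_zero_and_eq {a b p q : ℤ} (ha : (2 * a - p) ^ 2 = p ^ 2)
    (hb : (2 * b - q) ^ 2 = q ^ 2) (hab : q * (2 * a - p) + p * (2 * b - q) = 0) :
    (a = p ∧ b = 0) ∨ (a = 0 ∧ b = q) := by
  have ha' : a = 0 ∨ a = p := by
    have : 4 * (a * (a - p)) = 0 := by linear_combination ha
    simpa [sub_eq_zero] using this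
  have hb' : b = 0 ∨ b = q := by
    have : 4 * (b * (b - q)) = 0 := by linear_combination hb
    simpa [sub_eq_zero] using this
  rcases ha' with ha' | ha' <;> rcases hb' with hb' | hb'
  · have hpq : p * q = 0 := by rw [ha', hb'] at hab; linarith
    rcases mul_eq_zero.1 hpq with h | h <;> omega
  · omega
  · omega
  · have hpq : p * q = 0 := by rw [ha', hb'] at hab; linarith
    rcases mul_eq_zero.1 hpq with h | h <;> omega

section TypeDecomposition

variable {ι E : Type*} (J : E → E)

def applyJ (ε : ι → Bool) (z : ι → E) : ι → E := fun i => if ε i then J (z i) else z i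

def slotEigenvalue (t : Bool) : ℂ := if t then I else -I

theorem slotEigenvalue_sq (t : Bool) : slotEigenvalue t ^ 2 = -1 := by
  cases t <;> simp [slotEigenvalue]

theorem sum_slotEigenvalue {κ : Type*} [Fintype κ] (t : κ → Bool) :
    ∑ k, slotEigenvalue (t k) = I * (2 * #{k | t k} - Fintype.card κ) := by
  have (b : Bool) : slotEigenvalue b = I * (2 * (if b then 1 else 0) - 1) := by
    cases b <;> norm_num [slotEigenvalue]
  simp only [this, ← mul_sum, sum_sub_distrib, sum_boole]
  simp

variable [DecidableEq ι]

def updateJ (k : ι) (z : ι → E) : ι → E := update z k (J (z k))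

theorem applyJ_updateJ (ε : ι → Bool) (k : ι) (z : ι → E) :
    applyJ J ε (updateJ J k z) = updateJ J k (applyJ J ε z) := by
  ext i
  rcases eq_or_ne i k with rfl | hik
  · simp [applyJ, updateJ, apply_ite J]
  · simp [applyJ, updateJ, hik]

theorem applyJ_flip_updateJ [Neg E] (hJ : ∀ v, J (J v) = -v) (ε : ι → Bool) (k : ι)
    (z : ι → E) :
    applyJ J (update ε k (!ε k)) (updateJ J k z) =
      if ε k then applyJ J ε z else update (applyJ J ε z) k (-applyJ J ε z k) := by
  ext i
  rcases eq_or_ne i k with rfl | hik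
  · cases hε : ε i <;> simp [applyJ, updateJ, hε, hJ]
  · split_ifs <;> simp [applyJ, updateJ, hik]

variable [Fintype ι]

def typeWeight (τ ε : ι → Bool) : ℂ := ∏ i, if ε i then -slotEigenvalue (τ i) else 1

theorem typeWeight_flip (τ ε : ι → Bool) (k : ι) :
    typeWeight τ (update ε k (!ε k)) =
      (if ε k then slotEigenvalue (τ k) else -slotEigenvalue (τ k)) * typeWeight τ ε := by
  have hrest : ∏ i ∈ univ.erase k, (if update ε k (!ε k) i then -slotEigenvalue (τ i) else 1) =
      ∏ i ∈ univ.erase k, if ε i then -slotEigenvalue (τ i) else 1 :=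
    prod_congr rfl fun i hi => by rw [update_of_ne (ne_of_mem_erase hi)]
  rw [typeWeight, typeWeight, ← mul_prod_erase _ _ (mem_univ k), hrest,
    ← mul_prod_erase univ _ (mem_univ k)]
  have hsq := slotEigenvalue_sq (τ k)
  cases ε k
  · simp
  · simp only [update_self, Bool.not_true, Bool.false_eq_true, if_false, if_true]
    linear_combination (∏ i ∈ univ.erase k, if ε i then -slotEigenvalue (τ i) else 1) * hsq

/-- The component of type `τ` of `f` at `z`: the complex-multilinear extension of `f` evaluated at
`(z i - λ i • J (z i))ᵢ` with `λ i = slotEigenvalue (τ i)`. If `J ∘ J = -id`, these vectors are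
eigenvectors of `J` for the eigenvalues `λ i`. -/
def typeComponent (τ : ι → Bool) (z : ι → E) : ((ι → E) → ℝ) →ₗ[ℝ] ℂ where
  toFun f := ∑ ε, typeWeight τ ε * f (applyJ J ε z)
  map_add' f g := by simp [mul_add, sum_add_distrib]
  map_smul' c f := by simp [mul_sum, mul_left_comm]

theorem typeComponent_apply (τ : ι → Bool) (z : ι → E) (f : (ι → E) → ℝ) :
    typeComponent J τ z f = ∑ ε, typeWeight τ ε * f (applyJ J ε z) := rfl

theorem typeComponent_updateJ [Neg E] (hJ : ∀ v, J (J v) = -v) {f : (ι → E) → ℝ}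
    (hf : ∀ z k, f (update z k (-z k)) = -f z) (τ : ι → Bool) (k : ι) (z : ι → E) :
    typeComponent J τ (updateJ J k z) f = slotEigenvalue (τ k) * typeComponent J τ z f := by
  -- `J` in slot `k` toggles whether the pattern `ε` applies `J` there; reindex by that toggle.
  let flip : Equiv.Perm (ι → Bool) :=
    Involutive.toPerm (fun ε => update ε k (!ε k)) fun ε => by simp
  rw [typeComponent_apply, typeComponent_apply, ← Equiv.sum_comp flip, mul_sum]
  refine sum_congr rfl fun ε _ => ?_
  change typeWeight τ (update ε k (!ε k)) * f (applyJ J (update ε k (!ε k)) (updateJ J k z)) = _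
  rw [typeWeight_flip, applyJ_flip_updateJ J hJ]
  cases ε k
  · simp only [Bool.false_eq_true, if_false, hf]
    push_cast
    ring
  · simp only [if_true]
    ring

theorem typeComponent_comp_updateJ (τ : ι → Bool) (k : ι) (z : ι → E) (f : (ι → E) → ℝ) :
    typeComponent J τ z (fun y => f (updateJ J k y)) = typeComponent J τ (updateJ J k z) f := by
  simp only [typeComponent_apply, applyJ_updateJ]

theorem typeComponent_sum_comp_updateJ {κ : Type*} [Fintype κ] (ks : κ → ι) (τ : ι → Bool)
    (z : ι → E) (g : (ι → E) → ℝ) :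
    typeComponent J τ z (fun y => ∑ a, g (updateJ J (ks a) y)) =
      ∑ a, typeComponent J τ (updateJ J (ks a) z) g := by
  rw [← Finset.sum_fn, map_sum]
  exact sum_congr rfl fun a _ => typeComponent_comp_updateJ J τ (ks a) z g

theorem typeComponent_sum_updateJ [Neg E] (hJ : ∀ v, J (J v) = -v) {f : (ι → E) → ℝ}
    (hf : ∀ z k, f (update z k (-z k)) = -f z) {κ : Type*} [Fintype κ]
    (ks : κ → ι) (τ : ι → Bool) (z : ι → E) :
    typeComponent J τ z (fun y => ∑ a, f (updateJ J (ks a) y)) =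
      (∑ a, slotEigenvalue (τ (ks a))) * typeComponent J τ z f := by
  simp only [typeComponent_sum_comp_updateJ, typeComponent_updateJ J hJ hf, sum_mul]

theorem typeComponent_sum_sum_updateJ [Neg E] (hJ : ∀ v, J (J v) = -v) {f : (ι → E) → ℝ}
    (hf : ∀ z k, f (update z k (-z k)) = -f z) {κ : Type*} [Fintype κ]
    (ks : κ → ι) (τ : ι → Bool) (z : ι → E) :
    typeComponent J τ z (fun y => ∑ a, ∑ b, f (updateJ J (ks b) (updateJ J (ks a) y))) =
      (∑ a, slotEigenvalue (τ (ks a))) ^ 2 * typeComponent J τ z f := by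
  simp only [typeComponent_sum_comp_updateJ J ks τ z (fun y => ∑ b, f (updateJ J (ks b) y)),
    typeComponent_sum_updateJ J hJ hf, typeComponent_updateJ J hJ hf, ← mul_sum, ← sum_mul]
  ring

theorem typeComponent_comp_perm (σ : Equiv.Perm ι) (τ : ι → Bool) (z : ι → E)
    (f : (ι → E) → ℝ) :
    typeComponent J τ z (fun y => f (y ∘ σ)) = typeComponent J (τ ∘ σ) (z ∘ σ) f := by
  refine Fintype.sum_equiv (σ.symm.arrowCongr (Equiv.refl Bool)) _ _ fun ε => ?_
  have hw : typeWeight (τ ∘ σ) (ε ∘ σ) = typeWeight τ ε :=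
    Equiv.prod_comp σ fun i => if ε i then -slotEigenvalue (τ i) else 1
  change _ = typeWeight (τ ∘ σ) (ε ∘ σ) * _
  rw [hw]
  rfl

theorem typeComponent_not (τ : ι → Bool) (z : ι → E) (f : (ι → E) → ℝ) :
    typeComponent J (fun i => !τ i) z f = starRingEnd ℂ (typeComponent J τ z f) := by
  rw [typeComponent_apply, typeComponent_apply, map_sum]
  refine sum_congr rfl fun ε _ => ?_
  rw [map_mul, conj_ofReal, typeWeight, typeWeight, map_prod]
  congr 1
  refine prod_congr rfl fun i _ => ?_
  cases τ i <;> cases ε i <;> simp [slotEigenvalue]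

theorem sum_typeComponent (z : ι → E) (f : (ι → E) → ℝ) :
    ∑ τ, typeComponent J τ z f = 2 ^ Fintype.card ι * f z := by
  simp only [typeComponent_apply, typeWeight]
  rw [sum_comm]
  have hweights (ε : ι → Bool) :
      ∑ τ : ι → Bool, ∏ i, (if ε i then -slotEigenvalue (τ i) else 1) =
        if ε = fun _ => false then 2 ^ Fintype.card ι else 0 := by
    rw [← Fintype.prod_sum fun i t => if ε i then -slotEigenvalue t else 1]
    split_ifs with hε
    · simp [hε, one_add_one_eq_two]
    · obtain ⟨i, hi⟩ : ∃ i, ε i = true := by simpa [funext_iff] using hε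
      exact prod_eq_zero (mem_univ i) (by simp [hi, slotEigenvalue])
  simp only [← sum_mul, hweights, ite_mul, zero_mul, sum_ite_eq', mem_univ, if_true]
  rfl

end TypeDecomposition

section BlockForm

variable {M : Type*} [AddCommGroup M] [Module ℝ M] {p q : ℕ}

/-- The slots are indexed by `Fin p ⊕ Fin q` rather than by `Fin (p + q)` as in `totalAlt`, so
that the blocks of arguments and of values are `Sum.inl` and `Sum.inr`. -/
def blockForm (Q : AlternatingMap ℝ M (AlternatingMap ℝ M ℝ (Fin q)) (Fin p))
    (z : Fin p ⊕ Fin q → M) : ℝ :=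
  Q (z ∘ Sum.inl) (z ∘ Sum.inr)

variable (Q : AlternatingMap ℝ M (AlternatingMap ℝ M ℝ (Fin q)) (Fin p))

theorem blockForm_update_neg (z : Fin p ⊕ Fin q → M) (k : Fin p ⊕ Fin q) :
    blockForm Q (update z k (-z k)) = -blockForm Q z := by
  rcases k with a | b
  · rw [blockForm, Sum.update_inl_comp_inl, Sum.update_inl_comp_inr,
      show z (Sum.inl a) = (z ∘ Sum.inl) a from rfl, AlternatingMap.map_update_neg, update_eq_self]
    rfl
  · rw [blockForm, Sum.update_inr_comp_inl, Sum.update_inr_comp_inr,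
      show z (Sum.inr b) = (z ∘ Sum.inr) b from rfl, AlternatingMap.map_update_neg, update_eq_self]
    rfl

theorem blockForm_comp_perm_of_isLeft {σ : Equiv.Perm (Fin p ⊕ Fin q)}
    (hσ : Sum.isLeft ∘ σ = Sum.isLeft) (z : Fin p ⊕ Fin q → M) :
    blockForm Q (z ∘ σ) = Equiv.Perm.sign σ * blockForm Q z := by
  have hmaps : Set.MapsTo σ (Set.range Sum.inl) (Set.range Sum.inl) := by
    rintro _ ⟨a, rfl⟩
    obtain ⟨b, hb⟩ := Sum.isLeft_iff.mp (by simpa using congrFun hσ (Sum.inl a))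
    exact ⟨b, hb.symm⟩
  obtain ⟨⟨σ₁, σ₂⟩, rfl⟩ := Equiv.Perm.mem_sumCongrHom_range_of_perm_mapsTo_inl hmaps
  change Q ((z ∘ Sum.inl) ∘ σ₁) ((z ∘ Sum.inr) ∘ σ₂) = _
  rw [AlternatingMap.map_perm, AlternatingMap.map_perm, AlternatingMap.smul_apply]
  simp [blockForm, Equiv.Perm.sign_sumCongr, Units.smul_def]
  ring

end BlockForm

section Hermitian

variable (J : V →ₗ[ℝ] V) {p q : ℕ} (Q : AlternatingMap ℝ V (AlternatingMap ℝ V ℝ (Fin q)) (Fin p))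

theorem blockForm_argType (harg : ArgTypeP J p q Q) (z : Fin p ⊕ Fin q → V) :
    ∑ a, ∑ b, blockForm Q (updateJ J (Sum.inl b) (updateJ J (Sum.inl a) z)) =
      -(p : ℝ) ^ 2 * blockForm Q z := by
  have h := DFunLike.congr_fun (congrFun harg (z ∘ Sum.inl)) (z ∘ Sum.inr)
  simpa [calJ, blockForm, updateJ, _root_.sum_apply] using h

theorem blockForm_valType (hval : ValTypeP J p q Q) (z : Fin p ⊕ Fin q → V) :
    ∑ a, ∑ b, blockForm Q (updateJ J (Sum.inr b) (updateJ J (Sum.inr a) z)) =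
      -(q : ℝ) ^ 2 * blockForm Q z := by
  have h := congrFun (hval (z ∘ Sum.inl)) (z ∘ Sum.inr)
  simpa [calJ, blockForm, updateJ] using h

theorem blockForm_antiCommJ (hanti : AntiCommJ J p q Q) (z : Fin p ⊕ Fin q → V) :
    q * ∑ a, blockForm Q (updateJ J (Sum.inl a) z) =
      -p * ∑ b, blockForm Q (updateJ J (Sum.inr b) z) := by
  have h := congrFun (hanti (z ∘ Sum.inl)) (z ∘ Sum.inr)
  simpa [calJ, blockForm, updateJ, _root_.sum_apply] using h

theorem blockForm_alternatization (hker : totalAlt p q ⇑Q = 0) :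
    ∑ σ : Equiv.Perm (Fin p ⊕ Fin q), (Equiv.Perm.sign σ : ℝ) • (fun z => blockForm Q (z ∘ σ)) =
      0 := by
  ext z
  have h := congrFun hker (z ∘ finSumFinEquiv.symm)
  rw [totalAlt, ← Equiv.sum_comp finSumFinEquiv.permCongr] at h
  simpa [blockForm, Equiv.Perm.sign_permCongr, comp_def, Finset.sum_apply] using h

theorem typeComponent_blockForm_argType (hJ : ∀ v, J (J v) = -v) (harg : ArgTypeP J p q Q)
    (τ : Fin p ⊕ Fin q → Bool) (z : Fin p ⊕ Fin q → V) :
    (∑ a, slotEigenvalue (τ (Sum.inl a))) ^ 2 * typeComponent J τ z (blockForm Q) =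
      -p ^ 2 * typeComponent J τ z (blockForm Q) := by
  rw [← typeComponent_sum_sum_updateJ J hJ (blockForm_update_neg Q),
    funext (blockForm_argType J Q harg)]
  change typeComponent J τ z ((-(p : ℝ) ^ 2) • blockForm Q) = _
  rw [map_smul]
  simp

theorem typeComponent_blockForm_valType (hJ : ∀ v, J (J v) = -v) (hval : ValTypeP J p q Q)
    (τ : Fin p ⊕ Fin q → Bool) (z : Fin p ⊕ Fin q → V) :
    (∑ b, slotEigenvalue (τ (Sum.inr b))) ^ 2 * typeComponent J τ z (blockForm Q) =
      -q ^ 2 * typeComponent J τ z (blockForm Q) := by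
  rw [← typeComponent_sum_sum_updateJ J hJ (blockForm_update_neg Q),
    funext (blockForm_valType J Q hval)]
  change typeComponent J τ z ((-(q : ℝ) ^ 2) • blockForm Q) = _
  rw [map_smul]
  simp

theorem typeComponent_blockForm_antiCommJ (hJ : ∀ v, J (J v) = -v) (hanti : AntiCommJ J p q Q)
    (τ : Fin p ⊕ Fin q → Bool) (z : Fin p ⊕ Fin q → V) :
    q * (∑ a, slotEigenvalue (τ (Sum.inl a))) * typeComponent J τ z (blockForm Q) =
      -p * (∑ b, slotEigenvalue (τ (Sum.inr b))) * typeComponent J τ z (blockForm Q) := by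
  have h := congrArg (typeComponent J τ z) (funext (blockForm_antiCommJ J Q hanti))
  change typeComponent J τ z ((q : ℝ) • fun y => ∑ a, blockForm Q (updateJ J (Sum.inl a) y)) =
    typeComponent J τ z ((-(p : ℝ)) • fun y => ∑ b, blockForm Q (updateJ J (Sum.inr b) y)) at h
  rw [map_smul, map_smul, typeComponent_sum_updateJ J hJ (blockForm_update_neg Q),
    typeComponent_sum_updateJ J hJ (blockForm_update_neg Q)] at h
  simpa [mul_assoc] using h

theorem isLeft_or_isRight_of_typeComponent_blockForm_ne_zero (hJ : ∀ v, J (J v) = -v)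
    (harg : ArgTypeP J p q Q) (hval : ValTypeP J p q Q) (hanti : AntiCommJ J p q Q)
    {τ : Fin p ⊕ Fin q → Bool} {z : Fin p ⊕ Fin q → V}
    (hC : typeComponent J τ z (blockForm Q) ≠ 0) :
    τ = Sum.isLeft ∨ τ = Sum.isRight := by
  set a := #{k | τ (Sum.inl k)}
  set b := #{j | τ (Sum.inr j)}
  have hsa : ∑ k, slotEigenvalue (τ (Sum.inl k)) = I * (2 * a - p) := by
    simpa using sum_slotEigenvalue (τ ∘ Sum.inl)
  have hsb : ∑ j, slotEigenvalue (τ (Sum.inr j)) = I * (2 * b - q) := by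
    simpa using sum_slotEigenvalue (τ ∘ Sum.inr)
  have e1 := mul_right_cancel₀ hC (typeComponent_blockForm_argType J Q hJ harg τ z)
  have e2 := mul_right_cancel₀ hC (typeComponent_blockForm_valType J Q hJ hval τ z)
  have e3 := mul_right_cancel₀ hC (typeComponent_blockForm_antiCommJ J Q hJ hanti τ z)
  rw [hsa] at e1 e3
  rw [hsb] at e2 e3
  have ha : (2 * a - p : ℂ) ^ 2 = p ^ 2 := by
    linear_combination -e1 + (2 * a - p : ℂ) ^ 2 * I_sq
  have hb : (2 * b - q : ℂ) ^ 2 = q ^ 2 := by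
    linear_combination -e2 + (2 * b - q : ℂ) ^ 2 * I_sq
  have hab : (q * (2 * a - p) + p * (2 * b - q) : ℂ) = 0 := by
    linear_combination -I * e3 + (q * (2 * a - p) + p * (2 * b - q) : ℂ) * I_sq
  have hcorner : (a = p ∧ b = 0) ∨ (a = 0 ∧ b = q) := by
    exact_mod_cast eq_and_eq_zero_or_eq_zero_and_eq (a := a) (b := b) (p := p) (q := q)
      (by exact_mod_cast ha) (by exact_mod_cast hb) (by exact_mod_cast hab)
  refine eq_isLeft_or_isRight_of_card_filter ?_
  rwa [Fintype.card_fin, Fintype.card_fin]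

theorem typeComponent_isLeft_blockForm_comp_perm (hJ : ∀ v, J (J v) = -v)
    (harg : ArgTypeP J p q Q) (hval : ValTypeP J p q Q) (hanti : AntiCommJ J p q Q)
    (hpq : p ≠ q) (σ : Equiv.Perm (Fin p ⊕ Fin q)) (z : Fin p ⊕ Fin q → V) :
    typeComponent J Sum.isLeft z ((Equiv.Perm.sign σ : ℝ) • fun y => blockForm Q (y ∘ σ)) =
      if Sum.isLeft ∘ σ = Sum.isLeft then typeComponent J Sum.isLeft z (blockForm Q) else 0 := by
  rw [map_smul]
  split_ifs with hσ
  · rw [funext (blockForm_comp_perm_of_isLeft Q hσ)]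
    change (Equiv.Perm.sign σ : ℝ) •
      typeComponent J _ z ((Equiv.Perm.sign σ : ℝ) • blockForm Q) = _
    rw [map_smul, smul_smul, ← Int.cast_mul, ← Units.val_mul, Int.units_mul_self]
    simp
  · have hC : typeComponent J (Sum.isLeft ∘ σ) (z ∘ σ) (blockForm Q) = 0 := by
      by_contra hC
      rcases isLeft_or_isRight_of_typeComponent_blockForm_ne_zero J Q hJ harg hval hanti hC
        with h | h
      · exact hσ h
      · exact hpq (by simpa using Equiv.Perm.card_eq_of_isLeft_comp_eq_isRight h)
    rw [typeComponent_comp_perm, hC, smul_zero]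

theorem typeComponent_isLeft_blockForm_eq_zero (hJ : ∀ v, J (J v) = -v)
    (harg : ArgTypeP J p q Q) (hval : ValTypeP J p q Q) (hanti : AntiCommJ J p q Q)
    (hpq : p ≠ q) (hker : totalAlt p q ⇑Q = 0) (z : Fin p ⊕ Fin q → V) :
    typeComponent J Sum.isLeft z (blockForm Q) = 0 := by
  have h := congrArg (typeComponent J Sum.isLeft z) (blockForm_alternatization Q hker)
  simp only [map_sum, map_zero,
    typeComponent_isLeft_blockForm_comp_perm J Q hJ harg hval hanti hpq, sum_ite,
    sum_const_zero, add_zero, sum_const] at h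
  refine (smul_eq_zero.mp h).resolve_left ?_
  exact card_ne_zero_of_mem (mem_filter.mpr ⟨mem_univ 1, rfl⟩)

end Hermitian

theorem totalAlt_injective_on_antiCommJ_general
    (J : V →ₗ[ℝ] V) (hJ2 : ∀ v, J (J v) = -v)
    (p q : ℕ) (hpq : p ≠ q)
    (Q : AlternatingMap ℝ V (AlternatingMap ℝ V ℝ (Fin q)) (Fin p))
    (harg : ArgTypeP J p q Q) (hval : ValTypeP J p q Q) (hanti : AntiCommJ J p q Q)
    (hker : totalAlt p q ⇑Q = 0) :
    Q = 0 := by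
  have hleft := typeComponent_isLeft_blockForm_eq_zero J Q hJ2 harg hval hanti hpq hker
  have hcomp (τ z) : typeComponent J τ z (blockForm Q) = 0 := by
    by_contra hC
    rcases isLeft_or_isRight_of_typeComponent_blockForm_ne_zero J Q hJ2 harg hval hanti hC
      with rfl | rfl
    · exact hC (hleft z)
    · have hright : (Sum.isRight : Fin p ⊕ Fin q → Bool) = fun i => !i.isLeft := by
        funext i
        cases i <;> rfl
      exact hC (by rw [hright, typeComponent_not, hleft, map_zero])
  have hform (z) : blockForm Q z = 0 := by
    simpa [hcomp] using (sum_typeComponent J z (blockForm Q)).symm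
  ext v w
  simpa [blockForm] using hform (Sum.elim v w)

theorem totalAlt_injective_on_antiCommJ
    {n : ℕ} (hdim : Module.finrank ℝ V = 2 * n)
    (J : V →ₗ[ℝ] V) (hJ2 : ∀ v, J (J v) = -v)
    (hJg : ∀ u v : V, ⟪J u, J v⟫ = ⟪u, v⟫)
    (p q : ℕ) (hpq : p ≠ q)
    (Q : AlternatingMap ℝ V (AlternatingMap ℝ V ℝ (Fin q)) (Fin p))
    (harg : ArgTypeP J p q Q) (hval : ValTypeP J p q Q) (hanti : AntiCommJ J p q Q)
    (hker : totalAlt p q ⇑Q = 0) :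
    Q = 0 :=
  totalAlt_injective_on_antiCommJ_general J hJ2 p q hpq Q harg hval hanti hker
end
end

section
/- Let A be a smooth field of skew-symmetric endomorphisms on a connected manifold M such that Tr(A^{2k}) is a constant function on M for every positive integer k, and such that A² satisfies a fixed polynomial with simple real roots. Then the eigenvalues of A² are constant on M and the eigenbundles of A² have constant rank. -/
/-!
Since `A x ^ 2` is annihilated by `∏ μ ∈ s, (X - C μ)`, which has simple roots, for `μ ∈ s` the
Lagrange basis polynomial `L_μ` of the nodes `s` evaluated at `A x ^ 2` is a projection onto the
`μ`-eigenspace. Hence the rank of that eigenspace is `Tr (L_μ (A x ^ 2))`, a fixed linear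
combination of the traces `Tr (A x ^ (2 * k))`, none of which depends on `x`. For `μ ∉ s` the
eigenspace is zero.
-/

open scoped RealInnerProductSpace

open Polynomial Module Module.End Lagrange LinearMap

theorem Lagrange.X_sub_C_mul_basis {F ι : Type*} [Field F] [DecidableEq ι] {s : Finset ι}
    {v : ι → F} {i : ι} (hi : i ∈ s) :
    (X - C (v i)) * Lagrange.basis s v i = C (nodalWeight s v i) * nodal s v := by
  rw [basis_eq_prod_sub_inv_mul_nodal_div hi, ← nodal_erase_eq_nodal_div hi,
    nodal_eq_mul_nodal_erase hi]
  ring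

namespace Module.End

variable {K V : Type*} [Field K] [AddCommGroup V] [Module K V] {f g : End K V} {s : Finset K}

theorem eigenspace_eq_bot_of_aeval_nodal_eq_zero (hf : aeval f (nodal s id) = 0) {μ : K}
    (hμ : μ ∉ s) : eigenspace f μ = ⊥ := by
  refine (Submodule.eq_bot_iff _).2 fun v hv => ?_
  have hnodal : (nodal s id).eval μ ≠ 0 :=
    eval_nodal_not_at_node fun ν hν h => hμ (h ▸ hν)
  have := aeval_apply_of_mem_apply_eq_smul (p := nodal s id) (mem_eigenspace_iff.1 hv)
  rw [hf, LinearMap.zero_apply, eq_comm, smul_eq_zero] at this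
  exact this.resolve_left hnodal

theorem isProj_eigenspace_aeval_basis [DecidableEq K] (hf : aeval f (nodal s id) = 0) {μ : K}
    (hμ : μ ∈ s) :
    LinearMap.IsProj (eigenspace f μ) (aeval f (Lagrange.basis s id μ)) where
  map_mem v := by
    rw [mem_eigenspace_iff, ← sub_eq_zero]
    have := congr($(X_sub_C_mul_basis (v := id) hμ).aeval f v)
    simpa [hf] using this
  map_id v hv := by
    rw [aeval_apply_of_mem_apply_eq_smul (mem_eigenspace_iff.1 hv)]
    convert one_smul K v
    exact eval_basis_self (Set.injOn_id _) hμ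

theorem trace_aeval_eq_of_trace_pow_eq (htr : ∀ k, trace K V (f ^ k) = trace K V (g ^ k))
    (p : K[X]) : trace K V (aeval f p) = trace K V (aeval g p) := by
  induction p using Polynomial.induction_on' with
  | add p q hp hq => simp only [map_add, hp, hq]
  | monomial n a =>
    simp only [aeval_monomial, Algebra.algebraMap_eq_smul_one, smul_mul_assoc, one_mul,
      map_smul, htr]

variable [FiniteDimensional K V]

theorem finrank_eigenspace_eq_trace_aeval_basis [DecidableEq K] (hf : aeval f (nodal s id) = 0)
    {μ : K} (hμ : μ ∈ s) :
    (finrank K (eigenspace f μ) : K) = trace K V (aeval f (Lagrange.basis s id μ)) :=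
  ((isProj_eigenspace_aeval_basis hf hμ).trace).symm

theorem finrank_eigenspace_eq_of_trace_pow_eq [CharZero K] (hf : aeval f (nodal s id) = 0)
    (hg : aeval g (nodal s id) = 0) (htr : ∀ k, trace K V (f ^ k) = trace K V (g ^ k))
    (μ : K) : finrank K (eigenspace f μ) = finrank K (eigenspace g μ) := by
  classical
  by_cases hμ : μ ∈ s
  · exact_mod_cast (finrank_eigenspace_eq_trace_aeval_basis hf hμ).trans <|
      (trace_aeval_eq_of_trace_pow_eq htr _).trans
        (finrank_eigenspace_eq_trace_aeval_basis hg hμ).symm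
  · rw [eigenspace_eq_bot_of_aeval_nodal_eq_zero hf hμ,
      eigenspace_eq_bot_of_aeval_nodal_eq_zero hg hμ]

end Module.End

theorem eigenvalues_constant_of_constant_traces_general
    (M : Type*)
    (E : Type*) [NormedAddCommGroup E] [InnerProductSpace ℝ E] [FiniteDimensional ℝ E]
    (A : M → E →ₗ[ℝ] E)
    (htrace : ∀ k : ℕ, 0 < k → ∃ c : ℝ, ∀ x, LinearMap.trace ℝ E ((A x) ^ (2 * k)) = c)
    (s : Finset ℝ)
    (hpoly : ∀ x, Polynomial.aeval ((A x) ^ 2)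
      (∏ μ ∈ s, (Polynomial.X - Polynomial.C μ)) = 0) :
    ∀ (μ : ℝ) (x y : M),
      (Module.End.HasEigenvalue ((A x) ^ 2) μ ↔ Module.End.HasEigenvalue ((A y) ^ 2) μ) ∧
      Module.finrank ℝ (Module.End.eigenspace ((A x) ^ 2) μ)
        = Module.finrank ℝ (Module.End.eigenspace ((A y) ^ 2) μ) := by
  intro μ x y
  have htr : ∀ k, trace ℝ E ((A x ^ 2) ^ k) = trace ℝ E ((A y ^ 2) ^ k) := by
    rintro (_ | k)
    · simp
    · obtain ⟨c, hc⟩ := htrace (k + 1) k.succ_pos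
      rw [← pow_mul, ← pow_mul, hc, hc]
  have hrank := finrank_eigenspace_eq_of_trace_pow_eq (hpoly x) (hpoly y) htr
  refine ⟨?_, hrank μ⟩
  simp only [hasEigenvalue_iff, ne_eq, ← Submodule.finrank_eq_zero, hrank]

theorem eigenvalues_constant_of_constant_traces
    (M : Type*) [TopologicalSpace M] [ConnectedSpace M]
    (E : Type*) [NormedAddCommGroup E] [InnerProductSpace ℝ E] [FiniteDimensional ℝ E]
    (A : M → E →ₗ[ℝ] E)
    (hskew : ∀ x (u v : E), ⟪A x u, v⟫ = -⟪u, A x v⟫)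
    (htrace : ∀ k : ℕ, 0 < k → ∃ c : ℝ, ∀ x, LinearMap.trace ℝ E ((A x) ^ (2 * k)) = c)
    (s : Finset ℝ)
    (hpoly : ∀ x, Polynomial.aeval ((A x) ^ 2)
      (∏ μ ∈ s, (Polynomial.X - Polynomial.C μ)) = 0) :
    ∀ (μ : ℝ) (x y : M),
      (Module.End.HasEigenvalue ((A x) ^ 2) μ ↔ Module.End.HasEigenvalue ((A y) ^ 2) μ) ∧
      Module.finrank ℝ (Module.End.eigenspace ((A x) ^ 2) μ)
        = Module.finrank ℝ (Module.End.eigenspace ((A y) ^ 2) μ) :=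
  eigenvalues_constant_of_constant_traces_general M E A htrace s hpoly
end
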